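/- Let Ω ⊂ ℝⁿ be bounded, open, connected with Lipschitz boundary, and fix r > 0 and a uniform bound M on ‖λ_n‖_{L²(∂Ω)}. Suppose there is NO constant C such that ‖u‖_{L²(Ω)} ≤ C(‖∇u‖_{L²(Ω)} + 1) for all u in M_n = {u ∈ H¹(Ω) : L_n(u) ≤ r}, where L_n(u) = ‖Nu − f‖²_{L²(Ω)} + β‖Tu − g‖²_{L²(∂Ω)} + ⟨λ_n, Tu − g⟩_{L²(∂Ω)}. Then M_n contains constant functions of arbitrarily large absolute value; but for a constant function w ≡ c, L_n(w) ≥ β(|c|·|∂Ω|^{1/2} − ‖g‖_{L²(∂Ω)})² − M(|c|·|∂Ω|^{1/2} + ‖g‖_{L²(∂Ω)}) → ∞ as |c| → ∞, a contradiction. Hence such a constant C exists (generalized Poincaré inequality for the sublevel sets of the augmented Lagrangian loss). -/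

import Mathlib

/- STATEMENT 11 (generalized Poincaré inequality for sublevel sets of the
augmented Lagrangian loss).  Since Sobolev spaces on domains are not available
in Mathlib, the setting `H¹(Ω), L²(Ω), L²(∂Ω)` is axiomatized by abstract
Hilbert spaces `H1, L2, Lb` together with the `L²`-inclusion `J` (a compact
operator, by Rellich--Kondrachov for a bounded Lipschitz domain), the gradient
`G`, the trace `Tr`, the elliptic operator `Nop`, and the embedding `const` of
constant functions (whose range is exactly the kernel of the gradient, by
connectedness of `Ω`), with `Tr (const c) = c • oneB` and
`‖oneB‖ = √(surface measure of ∂Ω)`. -/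
theorem generalized_poincare_for_sublevel_sets
    {H1 L2 Lb : Type*}
    [NormedAddCommGroup H1] [InnerProductSpace ℝ H1] [CompleteSpace H1]
    [NormedAddCommGroup L2] [InnerProductSpace ℝ L2] [CompleteSpace L2]
    [NormedAddCommGroup Lb] [InnerProductSpace ℝ Lb] [CompleteSpace Lb]
    (J G : H1 →L[ℝ] L2) (Tr : H1 →L[ℝ] Lb) (Nop : H1 →L[ℝ] L2)
    (f : L2) (g : Lb) (β : ℝ) (hβ : 0 < β)
    (lam : ℕ → Lb) (M : ℝ) (hM : ∀ n, ‖lam n‖ ≤ M)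
    (r : ℝ) (hr : 0 < r)
    -- the `H¹` norm splits into the `L²` norm and the `L²` norm of the gradient
    (hnorm : ∀ u : H1, ‖u‖ ^ 2 = ‖J u‖ ^ 2 + ‖G u‖ ^ 2)
    -- Rellich--Kondrachov: the embedding `H¹(Ω) ↪ L²(Ω)` is compact
    (hcompact : IsCompactOperator J)
    -- constant functions
    (const : ℝ →ₗ[ℝ] H1) (oneB : Lb) (S : ℝ) (hS : 0 < S)
    (honeB : ‖oneB‖ = Real.sqrt S)
    (hconstG : ∀ c : ℝ, G (const c) = 0)
    (hker : ∀ u : H1, G u = 0 → ∃ c : ℝ, u = const c)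
    (hconstJ : ∀ c : ℝ, ‖J (const c)‖ = |c| * Real.sqrt S)
    (hTrconst : ∀ c : ℝ, Tr (const c) = c • oneB) :
    ∃ C : ℝ, 0 < C ∧ ∀ n : ℕ, ∀ u : H1,
      ‖Nop u - f‖ ^ 2 + β * ‖Tr u - g‖ ^ 2
          + (inner ℝ (lam n) (Tr u - g) : ℝ) ≤ r →
      ‖J u‖ ≤ C * (‖G u‖ + 1) := by
  by_contra hcon
  push_neg at hcon
  -- extract a bad sequence
  choose n u hL hbig using fun k : ℕ => hcon ((k : ℝ) + 1) (by positivity)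
  have hM0 : 0 ≤ M := le_trans (norm_nonneg _) (hM 0)
  -- basic norm comparisons
  have hJle : ∀ w : H1, ‖J w‖ ≤ ‖w‖ := by
    intro w
    have h2 : ‖J w‖ ^ 2 ≤ ‖w‖ ^ 2 := by
      rw [hnorm w]; nlinarith [sq_nonneg ‖G w‖]
    calc ‖J w‖ = Real.sqrt (‖J w‖ ^ 2) := by rw [Real.sqrt_sq (norm_nonneg _)]
      _ ≤ Real.sqrt (‖w‖ ^ 2) := Real.sqrt_le_sqrt h2
      _ = ‖w‖ := Real.sqrt_sq (norm_nonneg _)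
  have hbig' : ∀ k : ℕ, ((k : ℝ) + 1) * (‖G (u k)‖ + 1) < ‖J (u k)‖ := hbig
  have hupos : ∀ k : ℕ, 0 < ‖u k‖ := by
    intro k
    have h1 : (1 : ℝ) ≤ ((k : ℝ) + 1) * (‖G (u k)‖ + 1) := by
      nlinarith [norm_nonneg (G (u k)), Nat.cast_nonneg (α := ℝ) k]
    linarith [hbig' k, hJle (u k)]
  set t : ℕ → ℝ := fun k => ‖u k‖ with ht
  set v : ℕ → H1 := fun k => (t k)⁻¹ • u k with hv
  have hv1 : ∀ k, ‖v k‖ = 1 := by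
    intro k
    simp only [hv, norm_smul, norm_inv, Real.norm_eq_abs,
      abs_of_pos (hupos k)]
    rw [abs_of_pos (show 0 < t k from hupos k)]
    exact inv_mul_cancel₀ (ne_of_gt (hupos k))
  have huv : ∀ k, u k = t k • v k := by
    intro k
    simp only [hv, smul_smul]
    rw [mul_inv_cancel₀ (ne_of_gt (hupos k)), one_smul]
  have hGv : ∀ k : ℕ, ‖G (v k)‖ ≤ 1 / ((k : ℝ) + 1) := by
    intro k
    have hk1 : (0 : ℝ) < (k : ℝ) + 1 := by positivity
    have : ((k : ℝ) + 1) * ‖G (u k)‖ ≤ t k := by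
      have := hbig' k
      have := hJle (u k)
      nlinarith [norm_nonneg (G (u k))]
    have hGvk : ‖G (v k)‖ = ‖G (u k)‖ / t k := by
      simp only [hv, map_smul, norm_smul, norm_inv, Real.norm_eq_abs,
        abs_of_pos (hupos k)]
      rw [abs_of_pos (show 0 < t k from hupos k)]
      ring
    rw [hGvk, div_le_div_iff₀ (hupos k) hk1]
    nlinarith
  have hGv0 : Filter.Tendsto (fun k => G (v k)) Filter.atTop (nhds 0) := by
    apply squeeze_zero_norm hGv
    exact tendsto_one_div_add_atTop_nhds_zero_nat
  -- compactness: extract a convergent subsequence of J (v k)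
  obtain ⟨K, hK, hJK⟩ := hcompact.image_subset_compact_of_bounded
    (S := Set.range v) (by
      apply Bornology.IsBounded.subset (Metric.isBounded_closedBall (x := (0:H1)) (r := 1))
      rintro x ⟨k, rfl⟩
      simp [Metric.mem_closedBall, hv1 k])
  have hmem : ∀ k, J (v k) ∈ K := fun k => hJK ⟨v k, Set.mem_range_self k, rfl⟩
  obtain ⟨w, hwK, φ, hφ, hconv⟩ := hK.tendsto_subseq hmem
  -- the subsequence v ∘ φ is Cauchy in H1
  have hsub : ∀ a b : H1, ‖a - b‖ ≤ ‖J (a - b)‖ + ‖G (a - b)‖ := by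
    intro a b
    have h2 : ‖a - b‖ ^ 2 ≤ (‖J (a - b)‖ + ‖G (a - b)‖) ^ 2 := by
      rw [hnorm (a - b)]
      nlinarith [norm_nonneg (J (a - b)), norm_nonneg (G (a - b))]
    calc ‖a - b‖ = Real.sqrt (‖a - b‖ ^ 2) := by rw [Real.sqrt_sq (norm_nonneg _)]
      _ ≤ Real.sqrt ((‖J (a - b)‖ + ‖G (a - b)‖) ^ 2) := Real.sqrt_le_sqrt h2
      _ = _ := Real.sqrt_sq (by positivity)
  have hGφ : Filter.Tendsto (fun i => G (v (φ i))) Filter.atTop (nhds 0) :=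
    hGv0.comp hφ.tendsto_atTop
  have hcauchy : CauchySeq (fun i => v (φ i)) := by
    rw [Metric.cauchySeq_iff]
    intro ε hε
    have hc1 := hconv.cauchySeq
    have hc2 := hGφ.cauchySeq
    rw [Metric.cauchySeq_iff] at hc1 hc2
    obtain ⟨N1, hN1⟩ := hc1 (ε / 2) (by linarith)
    obtain ⟨N2, hN2⟩ := hc2 (ε / 2) (by linarith)
    refine ⟨max N1 N2, fun i hi j hj => ?_⟩
    have h1 := hN1 i (le_trans (le_max_left _ _) hi) j (le_trans (le_max_left _ _) hj)
    have h2 := hN2 i (le_trans (le_max_right _ _) hi) j (le_trans (le_max_right _ _) hj)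
    rw [dist_eq_norm] at h1 h2 ⊢
    calc ‖v (φ i) - v (φ j)‖ ≤ ‖J (v (φ i) - v (φ j))‖ + ‖G (v (φ i) - v (φ j))‖ :=
          hsub _ _
      _ = ‖J (v (φ i)) - J (v (φ j))‖ + ‖G (v (φ i)) - G (v (φ j))‖ := by
          rw [map_sub, map_sub]
      _ < ε / 2 + ε / 2 := add_lt_add h1 h2
      _ = ε := by ring
  obtain ⟨vlim, hvlim⟩ := cauchySeq_tendsto_of_complete hcauchy
  -- limit is a nonzero constant
  have hGlim : G vlim = 0 := by
    have h1 : Filter.Tendsto (fun i => G (v (φ i))) Filter.atTop (nhds (G vlim)) :=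
      (G.continuous.tendsto _).comp hvlim
    exact tendsto_nhds_unique h1 hGφ
  obtain ⟨c, hc⟩ := hker vlim hGlim
  have hJvlim : ‖J vlim‖ = 1 := by
    have h1 : Filter.Tendsto (fun i => ‖J (v (φ i))‖ ^ 2) Filter.atTop
        (nhds (‖J vlim‖ ^ 2)) := by
      have : Filter.Tendsto (fun i => J (v (φ i))) Filter.atTop (nhds (J vlim)) :=
        (J.continuous.tendsto _).comp hvlim
      exact ((continuous_norm.tendsto _).comp this).pow 2
    have h2 : Filter.Tendsto (fun i => ‖J (v (φ i))‖ ^ 2) Filter.atTop (nhds 1) := by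
      have heq : ∀ i, ‖J (v (φ i))‖ ^ 2 = 1 - ‖G (v (φ i))‖ ^ 2 := by
        intro i
        have := hnorm (v (φ i))
        rw [hv1 (φ i)] at this
        nlinarith
      simp only [heq]
      have : Filter.Tendsto (fun i => ‖G (v (φ i))‖ ^ 2) Filter.atTop (nhds 0) := by
        have := ((continuous_norm.tendsto _).comp hGφ).pow 2
        simpa using this
      have := (tendsto_const_nhds (x := (1:ℝ)) (f := Filter.atTop (α := ℕ))).sub this
      simpa using this
    have : ‖J vlim‖ ^ 2 = 1 := tendsto_nhds_unique h1 h2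
    nlinarith [norm_nonneg (J vlim)]
  have hcS : |c| * Real.sqrt S = 1 := by rw [← hconstJ c, ← hc, hJvlim]
  have hTrlim : ‖Tr vlim‖ = 1 := by
    rw [hc, hTrconst c, norm_smul, Real.norm_eq_abs, honeB, hcS]
  -- Tr (v (φ i)) → Tr vlim, so eventually ‖Tr (v (φ i))‖ ≥ 1/2
  have hTrconv : Filter.Tendsto (fun i => ‖Tr (v (φ i))‖) Filter.atTop (nhds 1) := by
    rw [← hTrlim]
    exact (continuous_norm.tendsto _).comp ((Tr.continuous.tendsto _).comp hvlim)
  have hev : ∀ᶠ i in Filter.atTop, (1:ℝ)/2 ≤ ‖Tr (v (φ i))‖ := by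
    exact hTrconv.eventually (eventually_ge_nhds (by norm_num))
  obtain ⟨N0, hN0⟩ := hev.exists_forall_of_atTop
  -- choose a large index
  set A : ℝ := max 1 ((M + r + 1) / β) with hA
  obtain ⟨K0, hK0⟩ := exists_nat_ge (2 * (A + ‖g‖))
  set i : ℕ := max N0 K0 with hi
  set s : ℝ := ‖Tr (u (φ i)) - g‖ with hs
  clear_value s
  -- lower bound on s
  have htbig : ((φ i : ℝ) + 1) ≤ t (φ i) := by
    have h1 := hbig' (φ i)
    have h2 := hJle (u (φ i))
    nlinarith [norm_nonneg (G (u (φ i)))]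
  have hii : ((i : ℝ)) ≤ (φ i : ℝ) := by exact_mod_cast hφ.le_apply
  have hKi : (2 * (A + ‖g‖)) ≤ (i : ℝ) := le_trans hK0 (by exact_mod_cast le_max_right N0 K0)
  have hsA : A ≤ s := by
    have hTr2 : (1:ℝ)/2 ≤ ‖Tr (v (φ i))‖ := hN0 i (le_max_left N0 K0)
    have hsge : t (φ i) * ‖Tr (v (φ i))‖ - ‖g‖ ≤ s := by
      have : ‖Tr (u (φ i))‖ - ‖g‖ ≤ s := by
        have := norm_sub_norm_le (Tr (u (φ i))) g
        linarith [this]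
      have heq : ‖Tr (u (φ i))‖ = t (φ i) * ‖Tr (v (φ i))‖ := by
        rw [huv (φ i), map_smul, norm_smul, Real.norm_eq_abs, abs_of_pos (hupos (φ i))]
      linarith [heq ▸ this]
    have ht2 : 2 * (A + ‖g‖) ≤ t (φ i) := by linarith
    have hmm : (2 * (A + ‖g‖)) * (1/2) ≤ t (φ i) * ‖Tr (v (φ i))‖ :=
      mul_le_mul ht2 hTr2 (by norm_num) (le_of_lt (hupos (φ i)))
    have : (2 * (A + ‖g‖)) * (1/2) = A + ‖g‖ := by ring
    linarith
  have hs1 : (1:ℝ) ≤ s := le_trans (le_max_left _ _) hsA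
  have hsβ : (M + r + 1) / β ≤ s := le_trans (le_max_right _ _) hsA
  -- contradiction with the sublevel bound
  have hLi := hL (φ i)
  rw [← hs] at hLi
  have hinner : -(M * s) ≤ (inner ℝ (lam (n (φ i))) (Tr (u (φ i)) - g) : ℝ) := by
    have h1 : |(inner ℝ (lam (n (φ i))) (Tr (u (φ i)) - g) : ℝ)| ≤
        ‖lam (n (φ i))‖ * ‖Tr (u (φ i)) - g‖ := abs_real_inner_le_norm _ _
    have h2 : ‖lam (n (φ i))‖ * s ≤ M * s := by
      apply mul_le_mul_of_nonneg_right (hM _) (by positivity)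
    have := neg_abs_le (inner ℝ (lam (n (φ i))) (Tr (u (φ i)) - g) : ℝ)
    rw [← hs] at h1
    linarith
  have hquad : M * s + r + 1 ≤ β * s ^ 2 := by
    have h1 : (M + r + 1) ≤ β * s := by
      rw [div_le_iff₀ hβ] at hsβ; linarith
    have h2 : (M + r + 1) * s ≤ (β * s) * s :=
      mul_le_mul_of_nonneg_right h1 (by linarith)
    have h3 : (r + 1) * 1 ≤ (r + 1) * s :=
      mul_le_mul_of_nonneg_left hs1 (by linarith)
    linarith [h2, h3]
  have : r + 1 ≤ r := by
    have h0 : (0:ℝ) ≤ ‖Nop (u (φ i)) - f‖ ^ 2 := by positivity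
    calc r + 1 ≤ β * s ^ 2 - M * s := by linarith
      _ ≤ ‖Nop (u (φ i)) - f‖ ^ 2 + β * s ^ 2
          + (inner ℝ (lam (n (φ i))) (Tr (u (φ i)) - g) : ℝ) := by linarith
      _ ≤ r := hLi
  linarith
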